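/- Let [n] = B ∪ N be a partition into nonempty disjoint sets, let y ∈ ℝⁿ with y > 0 entrywise, and let W ⊆ ℝⁿ be a linear subspace. Let y⁻¹W = {y⁻¹ w : w ∈ W} (entrywise product), and let σ_k = σ_k(ℓ_N^{y⁻¹W}) and σ̄_k = σ_k(ℓ_N^W) denote the k-th largest singular values of the lifting maps ℓ_N^{y⁻¹W} : ℝ^N → ℝ^B and ℓ_N^W : ℝ^N → ℝ^B. Then for all k ∈ [|N|]: σ_k / (‖y_B⁻¹‖_∞ · ‖y_N‖_∞) ≤ σ̄_k ≤ ‖y_B‖_∞ · ‖y_N⁻¹‖_∞ · σ_k, where y_B and y_N denote the restrictions of y to the coordinates in B and N, inverses are entrywise, and ‖·‖_∞ is the supremum norm. -/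

import Mathlib

open scoped RealInnerProductSpace

/-- The coordinate projection `π_I : ℝⁿ → ℝ^I` as a linear map. -/
noncomputable def coordRestrict {n : ℕ} (I : Finset (Fin n)) :
    EuclideanSpace ℝ (Fin n) →ₗ[ℝ] EuclideanSpace ℝ {i : Fin n // i ∈ I} where
  toFun x := WithLp.toLp 2 fun i => x i.1
  map_add' _ _ := rfl
  map_smul' _ _ := rfl

/-- Entrywise multiplication by the vector `a`, as a linear map `ℝⁿ → ℝⁿ`. -/
noncomputable def entrywiseMul {n : ℕ} (a : Fin n → ℝ) :
    EuclideanSpace ℝ (Fin n) →ₗ[ℝ] EuclideanSpace ℝ (Fin n) where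
  toFun x := WithLp.toLp 2 fun i => a i * x i
  map_add' x y := by ext i; simp [mul_add]
  map_smul' t x := by ext i; simp [mul_left_comm]

/-- `L` is the lifting map `L_I^W : ℝ^I → W`: for every `x`, `L x` is the minimum-norm
element of `{w ∈ W : w_I = Π_{π_I(W)}(x)}` (equivalently, of
`{w ∈ W : w_I - x ∈ (π_I(W))ᗮ}`). -/
def IsLiftingMap {n : ℕ} (I : Finset (Fin n)) (W : Submodule ℝ (EuclideanSpace ℝ (Fin n)))
    (L : EuclideanSpace ℝ {i : Fin n // i ∈ I} →ₗ[ℝ] EuclideanSpace ℝ (Fin n)) : Prop :=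
  ∀ x, (L x ∈ W ∧ coordRestrict I (L x) - x ∈ (W.map (coordRestrict I))ᗮ) ∧
    ∀ w ∈ W, coordRestrict I w - x ∈ (W.map (coordRestrict I))ᗮ → ‖L x‖ ≤ ‖w‖

/-- The `k`-th largest singular value of a linear map between finite-dimensional
normed spaces, via the Courant–Fischer characterization, with the convention that
it is `0` when `k` exceeds the dimension of the domain. -/
noncomputable def singularValue {E F : Type*} [NormedAddCommGroup E] [NormedAddCommGroup F]
    [Module ℝ E] [Module ℝ F] (M : E →ₗ[ℝ] F) (k : ℕ) : ℝ :=
  if k ≤ Module.finrank ℝ E then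
    sInf {t : ℝ | ∃ S : Submodule ℝ E,
      Module.finrank ℝ S = Module.finrank ℝ E - k + 1 ∧
      t = sSup {r : ℝ | ∃ u ∈ S, u ≠ 0 ∧ r = ‖M u‖ / ‖u‖}}
  else 0

/-!
Write `D = diag(y)`, `V` for a subspace, `P = π_N(V)` and `M = π_B ∘ L_N^V`,
`M̄ = π_B ∘ L_N^{DV}`. Since `π_N(DV) = D_N P`, every subspace `S ⊆ ℝ^N` yields the subspace
`S' = D_N(S ∩ P) ⊕ (D_N P)ᗮ` with `dim S' ≥ dim S`. The lift `L_N^{DV}` kills `(D_N P)ᗮ`, and on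
`D_N x` with `x ∈ P` it does at least as well on `B` as the competitor `D (L_N^V x)`, so
`‖M̄ u‖ ≤ ‖y_B‖_∞ ‖y_N⁻¹‖_∞ ‖M|_S‖ ‖u‖` on `S'`. Courant–Fischer then gives
`σ_k(M̄) ≤ ‖y_B‖_∞ ‖y_N⁻¹‖_∞ σ_k(M)`; the two inequalities of the theorem are this bound for
`(y⁻¹W, y)` and for `(W, y⁻¹)`.
-/

open Module

theorem Submodule.exists_le_finrank_eq {K E : Type*} [DivisionRing K] [AddCommGroup E]
    [Module K E] (U : Submodule K E) {m : ℕ} (hm : m ≤ finrank K U) :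
    ∃ S : Submodule K E, S ≤ U ∧ finrank K S = m := by
  obtain ⟨f, hf⟩ := exists_linearIndependent_of_le_finrank hm
  refine ⟨Submodule.span K (Set.range (U.subtype ∘ f)), ?_, ?_⟩
  · rw [Submodule.span_le]
    rintro _ ⟨i, rfl⟩
    exact (f i).2
  · rw [finrank_span_eq_card (hf.map' U.subtype U.ker_subtype), Fintype.card_fin]

theorem Submodule.finrank_le_finrank_map_inf_sup_orthogonal {E : Type*} [NormedAddCommGroup E]
    [InnerProductSpace ℝ E] [FiniteDimensional ℝ E] {D : E →ₗ[ℝ] E}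
    (hD : Function.Injective D) (S P : Submodule ℝ E) :
    finrank ℝ S ≤ finrank ℝ ((S ⊓ P).map D ⊔ (P.map D)ᗮ : Submodule ℝ E) := by
  have hSP := Submodule.finrank_sup_add_finrank_inf_eq S P
  have hSP_le := Submodule.finrank_le (S ⊔ P)
  have hmap_inf := (Submodule.equivMapOfInjective D hD (S ⊓ P)).finrank_eq
  have hmap := (Submodule.equivMapOfInjective D hD P).finrank_eq
  have horth := Submodule.finrank_add_finrank_orthogonal (P.map D)
  have hdisj : (S ⊓ P).map D ⊓ (P.map D)ᗮ = ⊥ :=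
    ((Submodule.orthogonal_disjoint _).mono_left (Submodule.map_mono inf_le_right)).eq_bot
  have hsup := Submodule.finrank_sup_add_finrank_inf_eq ((S ⊓ P).map D) (P.map D)ᗮ
  rw [hdisj, finrank_bot] at hsup
  omega

theorem EuclideanSpace.norm_le_mul_norm_of_abs_le {ι : Type*} [Fintype ι] {c : ℝ} (hc : 0 ≤ c)
    {u v : EuclideanSpace ℝ ι} (h : ∀ i, |u i| ≤ c * |v i|) : ‖u‖ ≤ c * ‖v‖ := by
  rw [EuclideanSpace.norm_eq, EuclideanSpace.norm_eq, ← Real.sqrt_sq hc,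
    ← Real.sqrt_mul (sq_nonneg c), Finset.mul_sum]
  gcongr with i
  simp only [Real.norm_eq_abs]
  rw [← mul_pow]
  exact pow_le_pow_left₀ (abs_nonneg _) (h i) 2

section NormOn

variable {E F : Type*} [NormedAddCommGroup E] [NormedSpace ℝ E] [NormedAddCommGroup F]
  [NormedSpace ℝ F]

noncomputable def normOn (M : E →ₗ[ℝ] F) (S : Submodule ℝ E) : ℝ :=
  sSup {r : ℝ | ∃ u ∈ S, u ≠ 0 ∧ r = ‖M u‖ / ‖u‖}

theorem normOn_nonneg (M : E →ₗ[ℝ] F) (S : Submodule ℝ E) : 0 ≤ normOn M S :=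
  Real.sSup_nonneg fun _ ⟨_, _, _, hr⟩ => hr ▸ by positivity

theorem normOn_le {M : E →ₗ[ℝ] F} {S : Submodule ℝ E} {C : ℝ} (hC : 0 ≤ C)
    (h : ∀ u ∈ S, ‖M u‖ ≤ C * ‖u‖) : normOn M S ≤ C := by
  refine Real.sSup_le ?_ hC
  rintro _ ⟨u, hu, hu0, rfl⟩
  rw [div_le_iff₀ (norm_pos_iff.2 hu0)]
  exact h u hu

theorem norm_apply_le_normOn [FiniteDimensional ℝ E] (M : E →ₗ[ℝ] F) {S : Submodule ℝ E}
    {u : E} (hu : u ∈ S) : ‖M u‖ ≤ normOn M S * ‖u‖ := by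
  rcases eq_or_ne u 0 with rfl | hu0
  · simp
  rw [← div_le_iff₀ (norm_pos_iff.2 hu0)]
  refine le_csSup ⟨‖M.toContinuousLinearMap‖, ?_⟩ ⟨u, hu, hu0, rfl⟩
  rintro _ ⟨v, -, hv0, rfl⟩
  rw [div_le_iff₀ (norm_pos_iff.2 hv0)]
  exact M.toContinuousLinearMap.le_opNorm v

theorem singularValue_le_mul_of_forall_exists [FiniteDimensional ℝ E] {M M' : E →ₗ[ℝ] F}
    {c : ℝ} (hc : 0 ≤ c) {k : ℕ} (hk1 : 1 ≤ k) (hk : k ≤ finrank ℝ E)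
    (h : ∀ S : Submodule ℝ E, ∃ S' : Submodule ℝ E, finrank ℝ S ≤ finrank ℝ S' ∧
      ∀ u ∈ S', ‖M' u‖ ≤ c * normOn M S * ‖u‖) :
    singularValue M' k ≤ c * singularValue M k := by
  set m := finrank ℝ E - k + 1
  have hm : m ≤ finrank ℝ (⊤ : Submodule ℝ E) := by rw [finrank_top]; omega
  obtain ⟨S₀, -, hS₀⟩ := (⊤ : Submodule ℝ E).exists_le_finrank_eq hm
  simp only [singularValue, if_pos hk]
  change sInf {t | ∃ S : Submodule ℝ E, finrank ℝ S = m ∧ t = normOn M' S} ≤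
    c * sInf {t | ∃ S : Submodule ℝ E, finrank ℝ S = m ∧ t = normOn M S}
  rw [← smul_eq_mul, ← Real.sInf_smul_of_nonneg hc]
  refine le_csInf ⟨c • normOn M S₀, Set.smul_mem_smul_set ⟨S₀, hS₀, rfl⟩⟩ ?_
  rintro _ ⟨_, ⟨S, hS, rfl⟩, rfl⟩
  obtain ⟨S', hSS', hS'⟩ := h S
  obtain ⟨S'', hS''S', hS''⟩ := S'.exists_le_finrank_eq (hS ▸ hSS')
  have hbdd : BddBelow {t | ∃ S : Submodule ℝ E, finrank ℝ S = m ∧ t = normOn M' S} :=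
    ⟨0, by rintro _ ⟨_, -, rfl⟩; exact normOn_nonneg _ _⟩
  exact (csInf_le hbdd ⟨S'', hS'', rfl⟩).trans
    (normOn_le (mul_nonneg hc (normOn_nonneg _ _)) fun u hu => hS' u (hS''S' hu))

end NormOn

theorem Finset.sup'_abs_nonneg {ι : Type*} {s : Finset ι} (hs : s.Nonempty) (a : ι → ℝ) :
    0 ≤ s.sup' hs fun i => |a i| :=
  (abs_nonneg _).trans (s.le_sup' (fun i => |a i|) hs.choose_spec)

theorem Finset.sup'_abs_pos {ι : Type*} {s : Finset ι} (hs : s.Nonempty) {a : ι → ℝ}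
    (ha : ∀ i, a i ≠ 0) : 0 < s.sup' hs fun i => |a i| :=
  (Finset.lt_sup'_iff hs).2 ⟨_, hs.choose_spec, abs_pos.2 (ha _)⟩

section Coordinates

variable {n : ℕ}

noncomputable def diagMul {ι : Type*} (a : ι → ℝ) :
    EuclideanSpace ℝ ι →ₗ[ℝ] EuclideanSpace ℝ ι where
  toFun x := WithLp.toLp 2 fun i => a i * x i
  map_add' x y := by ext i; simp [mul_add]
  map_smul' t x := by ext i; simp [mul_left_comm]

theorem diagMul_injective {ι : Type*} {a : ι → ℝ} (ha : ∀ i, a i ≠ 0) :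
    Function.Injective (diagMul a) := fun u v h => by
  ext i
  exact mul_left_cancel₀ (ha i) (congrArg (fun w : EuclideanSpace ℝ ι => w i) h)

theorem coordRestrict_entrywiseMul (I : Finset (Fin n)) (a : Fin n → ℝ)
    (v : EuclideanSpace ℝ (Fin n)) :
    coordRestrict I (entrywiseMul a v) = diagMul (fun i : I => a i) (coordRestrict I v) :=
  rfl

theorem map_entrywiseMul_map_entrywiseMul_inv {a : Fin n → ℝ} (ha : ∀ i, a i ≠ 0)
    (W : Submodule ℝ (EuclideanSpace ℝ (Fin n))) :
    (W.map (entrywiseMul fun i => (a i)⁻¹)).map (entrywiseMul a) = W := by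
  rw [← Submodule.map_comp]
  convert Submodule.map_id W
  ext v i
  exact mul_inv_cancel_left₀ (ha i) (v i)

theorem norm_sq_eq_norm_sq_coordRestrict_add {B N : Finset (Fin n)}
    (hBN : B ∪ N = Finset.univ) (hdisj : Disjoint B N) (u : EuclideanSpace ℝ (Fin n)) :
    ‖u‖ ^ 2 = ‖coordRestrict B u‖ ^ 2 + ‖coordRestrict N u‖ ^ 2 := by
  simp only [EuclideanSpace.norm_eq, Real.sq_sqrt (Finset.sum_nonneg fun _ _ => sq_nonneg _)]
  change _ = ∑ i : B, ‖u i‖ ^ 2 + ∑ i : N, ‖u i‖ ^ 2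
  rw [Finset.sum_coe_sort B (fun i => ‖u i‖ ^ 2), Finset.sum_coe_sort N (fun i => ‖u i‖ ^ 2),
    ← Finset.sum_union hdisj, hBN]

theorem norm_coordRestrict_entrywiseMul_le {B : Finset (Fin n)} (hB : B.Nonempty)
    (a : Fin n → ℝ) (v : EuclideanSpace ℝ (Fin n)) :
    ‖coordRestrict B (entrywiseMul a v)‖ ≤
      (B.sup' hB fun i => |a i|) * ‖coordRestrict B v‖ :=
  EuclideanSpace.norm_le_mul_norm_of_abs_le (Finset.sup'_abs_nonneg hB a) fun i => by
      rw [coordRestrict_entrywiseMul]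
      exact (abs_mul _ _).trans_le <|
        mul_le_mul_of_nonneg_right (B.le_sup' (fun i => |a i|) i.2) (abs_nonneg _)

theorem norm_le_sup'_mul_norm_diagMul {N : Finset (Fin n)} (hN : N.Nonempty) {a : Fin n → ℝ}
    (ha : ∀ i, a i ≠ 0) (x : EuclideanSpace ℝ N) :
    ‖x‖ ≤ (N.sup' hN fun i => |(a i)⁻¹|) * ‖diagMul (fun i : N => a i) x‖ :=
  EuclideanSpace.norm_le_mul_norm_of_abs_le (Finset.sup'_abs_nonneg hN _) fun i => by
      calc |x i| = |(a i)⁻¹| * |a i * x i| := by rw [← abs_mul, inv_mul_cancel_left₀ (ha i)]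
        _ ≤ _ := mul_le_mul_of_nonneg_right (N.le_sup' (fun i => |(a i)⁻¹|) i.2) (abs_nonneg _)

end Coordinates

namespace IsLiftingMap

variable {n : ℕ} {I : Finset (Fin n)} {V : Submodule ℝ (EuclideanSpace ℝ (Fin n))}
  {L : EuclideanSpace ℝ I →ₗ[ℝ] EuclideanSpace ℝ (Fin n)}

theorem coordRestrict_apply (hL : IsLiftingMap I V L) {x : EuclideanSpace ℝ I}
    (hx : x ∈ V.map (coordRestrict I)) : coordRestrict I (L x) = x :=
  sub_eq_zero.1 <| Submodule.disjoint_def.1 (Submodule.orthogonal_disjoint _) _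
    (sub_mem (Submodule.mem_map_of_mem (hL x).1.1) hx) (hL x).1.2

theorem apply_eq_zero (hL : IsLiftingMap I V L) {s : EuclideanSpace ℝ I}
    (hs : s ∈ (V.map (coordRestrict I))ᗮ) : L s = 0 :=
  norm_le_zero_iff.1 <| by
    simpa using (hL s).2 0 V.zero_mem (by rw [map_zero, zero_sub]; exact neg_mem hs)

theorem norm_coordRestrict_le {B : Finset (Fin n)} (hBI : B ∪ I = Finset.univ)
    (hdisj : Disjoint B I) (hL : IsLiftingMap I V L) {w : EuclideanSpace ℝ (Fin n)}
    (hw : w ∈ V) : ‖coordRestrict B (L (coordRestrict I w))‖ ≤ ‖coordRestrict B w‖ := by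
  have hx : coordRestrict I w ∈ V.map (coordRestrict I) := Submodule.mem_map_of_mem hw
  have hmin : ‖L (coordRestrict I w)‖ ≤ ‖w‖ :=
    (hL _).2 w hw (by rw [sub_self]; exact Submodule.zero_mem _)
  rw [← sq_le_sq₀ (norm_nonneg _) (norm_nonneg _)]
  have := pow_le_pow_left₀ (norm_nonneg _) hmin 2
  rw [norm_sq_eq_norm_sq_coordRestrict_add hBI hdisj,
    norm_sq_eq_norm_sq_coordRestrict_add hBI hdisj,
    hL.coordRestrict_apply hx] at this
  linarith

end IsLiftingMap

section Rescaling

variable {n : ℕ} {B N : Finset (Fin n)} (hBN : B ∪ N = Finset.univ) (hdisj : Disjoint B N)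
  (hB : B.Nonempty) (hN : N.Nonempty) {V : Submodule ℝ (EuclideanSpace ℝ (Fin n))}
  {y : Fin n → ℝ} (hy : ∀ i, y i ≠ 0)
  {L Lbar : EuclideanSpace ℝ N →ₗ[ℝ] EuclideanSpace ℝ (Fin n)}
  (hL : IsLiftingMap N V L) (hLbar : IsLiftingMap N (V.map (entrywiseMul y)) Lbar)
include hBN hdisj hy hL hLbar

theorem norm_coordRestrict_lift_entrywiseMul_le (S : Submodule ℝ (EuclideanSpace ℝ N))
    {u : EuclideanSpace ℝ N}
    (hu : u ∈ (S ⊓ V.map (coordRestrict N)).map (diagMul fun i : N => y i) ⊔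
      ((V.map (coordRestrict N)).map (diagMul fun i : N => y i))ᗮ) :
    ‖coordRestrict B (Lbar u)‖ ≤ (B.sup' hB fun i => |y i|) * (N.sup' hN fun i => |(y i)⁻¹|) *
      normOn ((coordRestrict B).comp L) S * ‖u‖ := by
  obtain ⟨_, ⟨x, ⟨hxS, hxP⟩, rfl⟩, s, hs, rfl⟩ := Submodule.mem_sup.1 hu
  set D := diagMul fun i : N => y i
  set a := B.sup' hB fun i => |y i|
  set b := N.sup' hN fun i => |(y i)⁻¹|
  have ha : 0 ≤ a := Finset.sup'_abs_nonneg hB y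
  have hs' : s ∈ ((V.map (entrywiseMul y)).map (coordRestrict N))ᗮ := by
    rw [← Submodule.map_comp] at hs ⊢
    exact hs
  set w := entrywiseMul y (L x)
  have hw : w ∈ V.map (entrywiseMul y) := Submodule.mem_map_of_mem (hL x).1.1
  have hwN : coordRestrict N w = D x := by
    rw [coordRestrict_entrywiseMul, hL.coordRestrict_apply hxP]
  have hpyth : ‖D x‖ ≤ ‖D x + s‖ := by
    have hDx : D x ∈ (V.map (coordRestrict N)).map D := Submodule.mem_map_of_mem hxP
    refine (mul_self_le_mul_self_iff (norm_nonneg _) (norm_nonneg _)).2 ?_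
    rw [norm_add_sq_eq_norm_sq_add_norm_sq_real (Submodule.inner_right_of_mem_orthogonal hDx hs)]
    exact le_add_of_nonneg_right (mul_self_nonneg _)
  calc ‖coordRestrict B (Lbar (D x + s))‖ = ‖coordRestrict B (Lbar (coordRestrict N w))‖ := by
        rw [map_add, hLbar.apply_eq_zero hs', add_zero, hwN]
    _ ≤ ‖coordRestrict B w‖ := hLbar.norm_coordRestrict_le hBN hdisj hw
    _ ≤ a * ‖coordRestrict B (L x)‖ := norm_coordRestrict_entrywiseMul_le hB y (L x)
    _ ≤ a * (normOn ((coordRestrict B).comp L) S * ‖x‖) :=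
        mul_le_mul_of_nonneg_left (norm_apply_le_normOn ((coordRestrict B).comp L) hxS) ha
    _ ≤ a * (normOn ((coordRestrict B).comp L) S * (b * ‖D x + s‖)) := by
        refine mul_le_mul_of_nonneg_left (mul_le_mul_of_nonneg_left ?_ (normOn_nonneg _ _)) ha
        exact (norm_le_sup'_mul_norm_diagMul hN hy x).trans <| mul_le_mul_of_nonneg_left hpyth <|
          Finset.sup'_abs_nonneg hN _
    _ = _ := by ring

theorem singularValue_comp_lift_entrywiseMul_le {k : ℕ} (hk1 : 1 ≤ k) (hk : k ≤ N.card) :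
    singularValue ((coordRestrict B).comp Lbar) k ≤
      (B.sup' hB fun i => |y i|) * (N.sup' hN fun i => |(y i)⁻¹|) *
        singularValue ((coordRestrict B).comp L) k :=
  singularValue_le_mul_of_forall_exists
    (mul_nonneg (Finset.sup'_abs_nonneg hB _) (Finset.sup'_abs_nonneg hN _)) hk1
    (by simpa using hk) fun S =>
      ⟨_, Submodule.finrank_le_finrank_map_inf_sup_orthogonal
        (diagMul_injective (ι := N) fun i => hy i) S (V.map (coordRestrict N)),
        fun _ hu => norm_coordRestrict_lift_entrywiseMul_le hBN hdisj hB hN hy hL hLbar S hu⟩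

end Rescaling

theorem statement17 (n : ℕ)
    (B N : Finset (Fin n)) (hBN : B ∪ N = Finset.univ) (hdisj : Disjoint B N)
    (hB : B.Nonempty) (hN : N.Nonempty)
    (W : Submodule ℝ (EuclideanSpace ℝ (Fin n)))
    (y : EuclideanSpace ℝ (Fin n)) (hy : ∀ i, 0 < y i)
    -- `L` is the lifting map `L_N^{y⁻¹W}` and `Lbar` is the lifting map `L_N^W`
    (L Lbar : EuclideanSpace ℝ {i : Fin n // i ∈ N} →ₗ[ℝ] EuclideanSpace ℝ (Fin n))
    (hL : IsLiftingMap N (W.map (entrywiseMul fun i => (y i)⁻¹)) L)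
    (hLbar : IsLiftingMap N W Lbar) :
    ∀ k : ℕ, 1 ≤ k → k ≤ N.card →
      singularValue ((coordRestrict B).comp L) k /
          ((B.sup' hB fun i => |(y i)⁻¹|) * (N.sup' hN fun i => |y i|)) ≤
        singularValue ((coordRestrict B).comp Lbar) k ∧
      singularValue ((coordRestrict B).comp Lbar) k ≤
        (B.sup' hB fun i => |y i|) * (N.sup' hN fun i => |(y i)⁻¹|) *
          singularValue ((coordRestrict B).comp L) k := by
  intro k hk1 hk2
  have hy0 : ∀ i, y i ≠ 0 := fun i => (hy i).ne'
  have hyinv : ∀ i, (y i)⁻¹ ≠ 0 := fun i => inv_ne_zero (hy0 i)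
  have hLbar' :
      IsLiftingMap N ((W.map (entrywiseMul fun i => (y i)⁻¹)).map (entrywiseMul y)) Lbar := by
    rwa [map_entrywiseMul_map_entrywiseMul_inv hy0]
  refine ⟨?_, singularValue_comp_lift_entrywiseMul_le hBN hdisj hB hN hy0 hL hLbar' hk1 hk2⟩
  have h := singularValue_comp_lift_entrywiseMul_le hBN hdisj hB hN hyinv hLbar hL hk1 hk2
  simp only [inv_inv] at h
  rwa [div_le_iff₀' (mul_pos (Finset.sup'_abs_pos hB hyinv) (Finset.sup'_abs_pos hN hy0))]
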